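/- arXiv:1911.04159 — 3 statements merged into one kernel-verified Lean document; each statement's English description precedes it below -/
import Mathlib

section
/- For the step distribution D of simple random walk on ℤ^d and any k, l ∈ ℝ^d: |D̂(l+k) - D̂(l)| ≤ 4 (1 - D̂(k))^{1/2}. -/
/-- The step distribution of simple random walk: `D(x) = (2d)⁻¹ 𝟙{|x|₁=1}`. -/
noncomputable def stepD (d : ℕ) (x : Fin d → ℤ) : ℝ :=
  if (∑ i, (x i).natAbs) = 1 then 1 / (2 * d) else 0

/-- `D̂(k) = ∑_x cos(k·x) D(x)`. -/
noncomputable def Dhat (d : ℕ) (k : Fin d → ℝ) : ℝ :=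
  ∑' x : Fin d → ℤ, Real.cos (∑ i, k i * (x i : ℝ)) * stepD d x

lemma support_step (d : ℕ) (x : Fin d → ℤ) (hx : (∑ i, (x i).natAbs) = 1) :
    ∃ i : Fin d, ∃ b : Bool, x = Pi.single i (if b then (1:ℤ) else -1) := by
  classical
  have h1 : ∃ i, (x i).natAbs ≠ 0 := by
    by_contra h
    push_neg at h
    simp [h] at hx
  obtain ⟨i, hi⟩ := h1
  have hsum : (x i).natAbs + ∑ j ∈ Finset.univ.erase i, (x j).natAbs = 1 := by
    rw [Finset.add_sum_erase Finset.univ (fun j => (x j).natAbs) (Finset.mem_univ i)]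
    exact hx
  have hi1 : (x i).natAbs = 1 := by omega
  have hrest : ∑ j ∈ Finset.univ.erase i, (x j).natAbs = 0 := by omega
  have hzero : ∀ j, j ≠ i → x j = 0 := by
    intro j hj
    have := (Finset.sum_eq_zero_iff.mp hrest) j (by simp [hj])
    omega
  have hcases : x i = 1 ∨ x i = -1 := by omega
  refine ⟨i, decide (x i = 1), ?_⟩
  funext j
  by_cases hji : j = i
  · subst hji
    rcases hcases with h | h <;> simp [h]
  · rw [hzero j hji, Pi.single_eq_of_ne hji]

noncomputable def uvec (d : ℕ) (p : Fin d × Bool) : Fin d → ℤ :=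
  Pi.single p.1 (if p.2 then (1:ℤ) else -1)

lemma uvec_inj (d : ℕ) : Function.Injective (uvec d) := by
  rintro ⟨i, b⟩ ⟨i', b'⟩ h
  have h1 : uvec d (i, b) i = uvec d (i', b') i := by rw [h]
  have hp : uvec d (i, b) i = (if b then (1:ℤ) else -1) := Pi.single_eq_same _ _
  have hne : (if b then (1:ℤ) else -1) ≠ 0 := by cases b <;> simp
  have hfst : i' = i := by
    by_contra hq
    rw [hp] at h1
    rw [show uvec d (i', b') i = 0 from Pi.single_eq_of_ne (Ne.symm hq) _] at h1
    exact hne h1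
  have h2 : uvec d (i', b') i = (if b' then (1:ℤ) else -1) := by
    show Pi.single i' _ i = _
    rw [hfst]
    exact Pi.single_eq_same _ _
  have hval : (if b then (1:ℤ) else -1) = (if b' then (1:ℤ) else -1) := by
    rw [← hp, h1, h2]
  have hsnd : b = b' := by cases b <;> cases b' <;> simp_all
  simp [hfst, hsnd]

lemma sum_natAbs_uvec (d : ℕ) (i : Fin d) (b : Bool) :
    (∑ j, ((uvec d (i, b)) j).natAbs) = 1 := by
  rw [Finset.sum_eq_single i]
  · cases b <;> simp [uvec]
  · intro j _ hj
    rw [show uvec d (i, b) j = 0 from Pi.single_eq_of_ne hj _]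
    simp
  · simp

lemma sum_mul_uvec (d : ℕ) (k : Fin d → ℝ) (i : Fin d) (b : Bool) :
    (∑ j, k j * (((uvec d (i, b)) j : ℤ) : ℝ)) = k i * (if b then (1:ℝ) else -1) := by
  rw [Finset.sum_eq_single i]
  · cases b <;> simp [uvec]
  · intro j _ hj
    rw [show uvec d (i, b) j = 0 from Pi.single_eq_of_ne hj _]
    simp
  · simp

lemma Dhat_eq (d : ℕ) (hd : 0 < d) (k : Fin d → ℝ) :
    Dhat d k = (∑ i, Real.cos (k i)) / d := by
  classical
  rw [Dhat, tsum_eq_sum (s := Finset.univ.image (uvec d))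
    (by
      intro x hx
      rw [stepD]
      by_cases h : (∑ i, (x i).natAbs) = 1
      · exfalso
        obtain ⟨i, b, rfl⟩ := support_step d x h
        exact hx (Finset.mem_image.mpr ⟨(i, b), Finset.mem_univ _, rfl⟩)
      · simp [h])]
  rw [Finset.sum_image (fun x _ y _ h => uvec_inj d h)]
  rw [Fintype.sum_prod_type]
  have key : ∀ i : Fin d, ∑ b : Bool,
      Real.cos (∑ j, k j * (((uvec d (i, b)) j : ℤ) : ℝ)) * stepD d (uvec d (i, b))
      = Real.cos (k i) / d := by
    intro i
    have hs : ∀ b : Bool, stepD d (uvec d (i, b)) = 1 / (2 * d) := by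
      intro b; rw [stepD, if_pos (sum_natAbs_uvec d i b)]
    have hd0 : (d:ℝ) ≠ 0 := Nat.cast_ne_zero.mpr hd.ne'
    rw [Fintype.sum_bool, hs, hs, sum_mul_uvec, sum_mul_uvec]
    norm_num [Real.cos_neg]
    field_simp
    ring
  rw [Finset.sum_congr rfl (fun i _ => key i)]
  rw [Finset.sum_div]

/-- `|D̂(l+k) - D̂(l)| ≤ 4 (1 - D̂(k))^{1/2}`. -/
theorem Dhat_increment_bound (d : ℕ) (hd : 0 < d) (k l : Fin d → ℝ) :
    |Dhat d (l + k) - Dhat d l| ≤ 4 * Real.sqrt (1 - Dhat d k) := by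
  have hd' : (0:ℝ) < d := by exact_mod_cast hd
  rw [Dhat_eq d hd (l + k), Dhat_eq d hd l, Dhat_eq d hd k]
  set a : ℝ := 1 - (∑ i, Real.cos (k i)) / d with ha
  have hsumcos : (∑ i, Real.cos (k i)) ≤ d := by
    calc (∑ i, Real.cos (k i)) ≤ ∑ _i : Fin d, (1:ℝ) :=
          Finset.sum_le_sum (fun i _ => Real.cos_le_one (k i))
      _ = d := by simp
  have hsumcos' : (-d : ℝ) ≤ ∑ i, Real.cos (k i) := by
    calc (-d : ℝ) = ∑ _i : Fin d, (-1:ℝ) := by simp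
      _ ≤ ∑ i, Real.cos (k i) :=
          Finset.sum_le_sum (fun i _ => Real.neg_one_le_cos (k i))
  have ha0 : 0 ≤ a := by
    rw [ha, sub_nonneg, div_le_one hd']; exact hsumcos
  have ha2 : a ≤ 2 := by
    rw [ha]
    have : (-1:ℝ) ≤ (∑ i, Real.cos (k i)) / d := by
      rw [le_div_iff₀ hd']; linarith
    linarith
  have hda : ∑ i, (1 - Real.cos (k i)) = d * a := by
    rw [Finset.sum_sub_distrib]
    simp only [Finset.sum_const, Finset.card_univ, Fintype.card_fin, nsmul_eq_mul, mul_one]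
    rw [ha]; field_simp
  -- pointwise bound
  have pt : ∀ x y : ℝ, |Real.cos (x + y) - Real.cos x| ≤ |Real.sin y| + (1 - Real.cos y) := by
    intro x y
    have h : Real.cos (x + y) - Real.cos x
        = Real.cos x * (Real.cos y - 1) - Real.sin x * Real.sin y := by
      rw [Real.cos_add]; ring
    rw [h]
    calc |Real.cos x * (Real.cos y - 1) - Real.sin x * Real.sin y|
        ≤ |Real.cos x * (Real.cos y - 1)| + |Real.sin x * Real.sin y| := abs_sub _ _
      _ = |Real.cos x| * |Real.cos y - 1| + |Real.sin x| * |Real.sin y| := by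
          rw [abs_mul, abs_mul]
      _ ≤ 1 * (1 - Real.cos y) + 1 * |Real.sin y| := by
          have h1 := Real.abs_cos_le_one x
          have h2 := Real.abs_sin_le_one x
          have h3 : |Real.cos y - 1| = 1 - Real.cos y := by
            rw [abs_of_nonpos (by linarith [Real.cos_le_one y])]; ring
          have h4 := abs_nonneg (Real.sin y)
          have h5 := Real.cos_le_one y
          rw [h3]
          nlinarith
      _ = |Real.sin y| + (1 - Real.cos y) := by ring
  -- sum of |sin|
  set S : ℝ := ∑ i, |Real.sin (k i)| with hS
  have hS0 : 0 ≤ S := Finset.sum_nonneg (fun i _ => abs_nonneg _)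
  have hCS : S ^ 2 ≤ d * ∑ i, Real.sin (k i) ^ 2 := by
    have := sq_sum_le_card_mul_sum_sq (s := Finset.univ) (f := fun i => |Real.sin (k i)|)
    simpa [sq_abs] using this
  have hsin2 : ∑ i, Real.sin (k i) ^ 2 ≤ 2 * (d * a) := by
    rw [← hda, Finset.mul_sum]
    refine Finset.sum_le_sum (fun i _ => ?_)
    have h1 := Real.sin_sq_add_cos_sq (k i)
    have h2 := Real.cos_le_one (k i)
    have h3 := Real.neg_one_le_cos (k i)
    nlinarith
  have hSle : S ≤ d * (Real.sqrt 2 * Real.sqrt a) := by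
    have hsq : S ^ 2 ≤ (d * (Real.sqrt 2 * Real.sqrt a)) ^ 2 := by
      have h2 : Real.sqrt 2 ^ 2 = 2 := Real.sq_sqrt (by norm_num)
      have h3 : Real.sqrt a ^ 2 = a := Real.sq_sqrt ha0
      calc S ^ 2 ≤ d * (2 * (d * a)) := le_trans hCS (by nlinarith)
        _ = (d * (Real.sqrt 2 * Real.sqrt a)) ^ 2 := by
            rw [mul_pow, mul_pow, h2, h3]; ring
    have hpos : 0 ≤ d * (Real.sqrt 2 * Real.sqrt a) := by positivity
    nlinarith
  have haS : a ≤ Real.sqrt 2 * Real.sqrt a := by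
    have h1 : Real.sqrt a * Real.sqrt a = a := Real.mul_self_sqrt ha0
    have h2 : Real.sqrt a ≤ Real.sqrt 2 := Real.sqrt_le_sqrt ha2
    nlinarith [Real.sqrt_nonneg a]
  have hsqrt2 : Real.sqrt 2 ≤ 2 := by
    nlinarith [Real.sq_sqrt (show (0:ℝ) ≤ 2 by norm_num), Real.sqrt_nonneg 2]
  -- main chain
  have hmain : |(∑ i, Real.cos ((l + k) i)) / d - (∑ i, Real.cos (l i)) / d|
      ≤ (S + d * a) / d := by
    rw [div_sub_div_same, ← Finset.sum_sub_distrib, abs_div, abs_of_pos hd']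
    gcongr
    calc |∑ i, (Real.cos ((l + k) i) - Real.cos (l i))|
        ≤ ∑ i, |Real.cos ((l + k) i) - Real.cos (l i)| :=
          Finset.abs_sum_le_sum_abs _ _
      _ ≤ ∑ i, (|Real.sin (k i)| + (1 - Real.cos (k i))) := by
          refine Finset.sum_le_sum (fun i _ => ?_)
          have := pt (l i) (k i)
          simpa [Pi.add_apply] using this
      _ = S + d * a := by rw [Finset.sum_add_distrib, hda]
  calc |(∑ i, Real.cos ((l + k) i)) / d - (∑ i, Real.cos (l i)) / d|
      ≤ (S + d * a) / d := hmain
    _ ≤ (d * (Real.sqrt 2 * Real.sqrt a) + d * (Real.sqrt 2 * Real.sqrt a)) / d := by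
        have h2 : (d:ℝ) * a ≤ d * (Real.sqrt 2 * Real.sqrt a) :=
          mul_le_mul_of_nonneg_left haS hd'.le
        gcongr <;> assumption
    _ = 2 * (Real.sqrt 2 * Real.sqrt a) := by
        field_simp
        try ring
    _ ≤ 4 * Real.sqrt a := by
        nlinarith [Real.sqrt_nonneg a, hsqrt2]
end

section
/- Let Π : ℤ^d → ℝ be symmetric and summable, and set S = ∑_x |Π(x)| and S_k = ∑_x (1 - cos(k·x))|Π(x)|. Then for all k, l ∈ ℝ^d: |Π̂(l+k) - Π̂(l)| ≤ (S · 2 S_k)^{1/2} + S_k, where Π̂(l) = ∑_x cos(l·x)Π(x). -/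
/-- Fourier transform on `ℤ^d` of a symmetric summable function (via cosines). -/
noncomputable def fourierZd (d : ℕ) (Pi : (Fin d → ℤ) → ℝ) (l : Fin d → ℝ) : ℝ :=
  ∑' x : Fin d → ℤ, Real.cos (∑ i, l i * (x i : ℝ)) * Pi x

/-! Since `cos (a + b) - cos a = cos a (cos b - 1) - sin a sin b`, the increment of `Π̂` is at most
`∑ |sin (k·x)| |Π x| + S_k`. Cauchy–Schwarz with weight `|Π|` bounds the sine series by
`(S ∑ sin² (k·x) |Π x|)^{1/2}`, and `sin² t ≤ 2 (1 - cos t)` turns the last series into `2 S_k`. -/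

open Real

theorem abs_cos_add_sub_cos_le (a b : ℝ) : |cos (a + b) - cos a| ≤ |sin b| + (1 - cos b) := by
  have h : cos (a + b) - cos a = cos a * (cos b - 1) - sin a * sin b := by
    rw [cos_add]; ring
  have hb : |cos b - 1| = 1 - cos b := by
    rw [abs_sub_comm, abs_of_nonneg (sub_nonneg.2 (cos_le_one b))]
  calc |cos (a + b) - cos a| ≤ |cos a| * |cos b - 1| + |sin a| * |sin b| := by
        rw [h, ← abs_mul, ← abs_mul]; exact abs_sub _ _
    _ ≤ 1 * |cos b - 1| + 1 * |sin b| := by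
        gcongr
        exacts [abs_cos_le_one a, abs_sin_le_one a]
    _ = |sin b| + (1 - cos b) := by rw [hb]; ring

theorem sin_sq_le_two_mul_one_sub_cos (t : ℝ) : sin t ^ 2 ≤ 2 * (1 - cos t) := by
  nlinarith [sin_sq_add_cos_sq t, cos_le_one t, neg_one_le_cos t]

section Summation

variable {ι : Type*}

theorem Summable.mul_of_abs_le {c w : ι → ℝ} {C : ℝ} (hw : Summable w) (hc : ∀ x, |c x| ≤ C) :
    Summable fun x => c x * w x :=
  (hw.abs.mul_left C).of_norm_bounded fun x => by
    rw [norm_eq_abs, abs_mul]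
    exact mul_le_mul_of_nonneg_right (hc x) (abs_nonneg _)

theorem Summable.one_sub_cos_mul {w : ι → ℝ} (hw : Summable w) (b : ι → ℝ) :
    Summable fun x => (1 - cos (b x)) * w x :=
  hw.mul_of_abs_le (C := 2) fun x => by
    rw [abs_of_nonneg (sub_nonneg.2 (cos_le_one _))]
    linarith [neg_one_le_cos (b x)]

theorem tsum_mul_le_sqrt_tsum_mul_tsum_sq_mul {f w : ι → ℝ} (hw : 0 ≤ w) (hws : Summable w)
    (hfw : Summable fun x => f x ^ 2 * w x) :
    ∑' x, f x * w x ≤ √((∑' x, w x) * ∑' x, f x ^ 2 * w x) := by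
  refine tsum_le_of_sum_le' (sqrt_nonneg _) fun s => ?_
  calc ∑ x ∈ s, f x * w x = ∑ x ∈ s, (f x * √(w x)) * √(w x) := by
        refine Finset.sum_congr rfl fun x _ => ?_
        rw [mul_assoc, mul_self_sqrt (hw x)]
    _ ≤ √(∑ x ∈ s, (f x * √(w x)) ^ 2) * √(∑ x ∈ s, √(w x) ^ 2) :=
        sum_mul_le_sqrt_mul_sqrt s _ _
    _ = √(∑ x ∈ s, f x ^ 2 * w x) * √(∑ x ∈ s, w x) := by
        simp only [mul_pow, sq_sqrt (hw _)]
    _ ≤ √(∑' x, f x ^ 2 * w x) * √(∑' x, w x) := by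
        gcongr
        exacts [hfw.sum_le_tsum s fun x _ => mul_nonneg (sq_nonneg _) (hw x),
          hws.sum_le_tsum s fun x _ => hw x]
    _ = √((∑' x, w x) * ∑' x, f x ^ 2 * w x) := by
        rw [← sqrt_mul (tsum_nonneg fun x => mul_nonneg (sq_nonneg _) (hw x)), mul_comm]

theorem tsum_abs_sin_mul_le {w : ι → ℝ} (hw₀ : 0 ≤ w) (hw : Summable w) (b : ι → ℝ) :
    ∑' x, |sin (b x)| * w x ≤ √((∑' x, w x) * (2 * ∑' x, (1 - cos (b x)) * w x)) := by
  have hsin : Summable fun x => |sin (b x)| ^ 2 * w x :=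
    hw.mul_of_abs_le (C := 1) fun x => by simpa using sin_sq_le_one (b x)
  have hcos := hw.one_sub_cos_mul b
  refine (tsum_mul_le_sqrt_tsum_mul_tsum_sq_mul hw₀ hw hsin).trans ?_
  refine sqrt_le_sqrt (mul_le_mul_of_nonneg_left ?_ (tsum_nonneg hw₀))
  rw [← tsum_mul_left]
  refine hsin.tsum_le_tsum (fun x => ?_) (hcos.mul_left 2)
  rw [sq_abs, ← mul_assoc]
  exact mul_le_mul_of_nonneg_right (sin_sq_le_two_mul_one_sub_cos _) (hw₀ x)

theorem abs_tsum_cos_add_mul_sub_tsum_cos_mul_le {w : ι → ℝ} (hw : Summable w) (a b : ι → ℝ) :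
    |∑' x, cos (a x + b x) * w x - ∑' x, cos (a x) * w x| ≤
      ∑' x, |sin (b x)| * |w x| + ∑' x, (1 - cos (b x)) * |w x| := by
  have hbound : ∀ x, |(cos (a x + b x) - cos (a x)) * w x| ≤
      |sin (b x)| * |w x| + (1 - cos (b x)) * |w x| := fun x => by
    rw [abs_mul, ← add_mul]
    exact mul_le_mul_of_nonneg_right (abs_cos_add_sub_cos_le _ _) (abs_nonneg _)
  have hsin : Summable fun x => |sin (b x)| * |w x| :=
    hw.abs.mul_of_abs_le (C := 1) fun x => by simpa using abs_sin_le_one (b x)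
  have hcos := hw.abs.one_sub_cos_mul b
  have hdiff : Summable fun x => |(cos (a x + b x) - cos (a x)) * w x| :=
    (hsin.add hcos).of_nonneg_of_le (fun x => abs_nonneg _) hbound
  rw [← (hw.mul_of_abs_le fun x => abs_cos_le_one (a x + b x)).tsum_sub
    (hw.mul_of_abs_le fun x => abs_cos_le_one (a x)), ← hsin.tsum_add hcos]
  simp only [← sub_mul]
  calc |∑' x, (cos (a x + b x) - cos (a x)) * w x|
      ≤ ∑' x, |(cos (a x + b x) - cos (a x)) * w x| := by
        simpa only [norm_eq_abs] using norm_tsum_le_tsum_norm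
          (f := fun x => (cos (a x + b x) - cos (a x)) * w x) hdiff
    _ ≤ _ := hdiff.tsum_le_tsum hbound (hsin.add hcos)

end Summation

theorem Pihat_increment_bound_general (d : ℕ) (Pi : (Fin d → ℤ) → ℝ)
    (hsum : Summable fun x => |Pi x|)
    (k l : Fin d → ℝ)
    (S Sk : ℝ) (hS : S = ∑' x : Fin d → ℤ, |Pi x|)
    (hSk : Sk = ∑' x : Fin d → ℤ, (1 - Real.cos (∑ i, k i * (x i : ℝ))) * |Pi x|) :
    |fourierZd d Pi (l + k) - fourierZd d Pi l| ≤ Real.sqrt (S * (2 * Sk)) + Sk := by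
  have hphase : ∀ x : Fin d → ℤ,
      ∑ i, (l + k) i * (x i : ℝ) = ∑ i, l i * (x i : ℝ) + ∑ i, k i * (x i : ℝ) := fun x => by
    simp only [_root_.Pi.add_apply, add_mul, Finset.sum_add_distrib]
  simp only [fourierZd, hphase]
  subst hS hSk
  refine (abs_tsum_cos_add_mul_sub_tsum_cos_mul_le hsum.of_abs _ _).trans ?_
  gcongr
  exact tsum_abs_sin_mul_le (fun x => abs_nonneg _) hsum _

/-- For symmetric summable `Π : ℤ^d → ℝ`, with `S = ∑|Π|` and
`S_k = ∑ (1-cos(k·x))|Π(x)|`, one has `|Π̂(l+k) - Π̂(l)| ≤ (S · 2S_k)^{1/2} + S_k`. -/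
theorem Pihat_increment_bound (d : ℕ) (Pi : (Fin d → ℤ) → ℝ)
    (hsymm : ∀ x, Pi (-x) = Pi x) (hsum : Summable fun x => |Pi x|)
    (k l : Fin d → ℝ)
    (S Sk : ℝ) (hS : S = ∑' x : Fin d → ℤ, |Pi x|)
    (hSk : Sk = ∑' x : Fin d → ℤ, (1 - Real.cos (∑ i, k i * (x i : ℝ))) * |Pi x|) :
    |fourierZd d Pi (l + k) - fourierZd d Pi l| ≤ Real.sqrt (S * (2 * Sk)) + Sk :=
  Pihat_increment_bound_general d Pi hsum k l S Sk hS hSk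
end

section
/- In site percolation on ℤ^d with parameter p, for any x with |x|₁ ≥ 2 (and assuming the BK inequality), P_p({0 ↔ x} ∘ {0 ↔ x}) ≤ p² ((J∗τ_p)(x))², where J(x) = 𝟙{|x|₁=1} and (J∗τ_p)(x) = ∑_y J(y)τ_p(x-y). -/
open MeasureTheory

/-- A site percolation configuration on `ℤ^d`. -/
abbrev Config (d : ℕ) := (Fin d → ℤ) → Bool

/-- The ℓ¹ norm of a point of `ℤ^d`. -/
def norm1 {d : ℕ} (x : Fin d → ℤ) : ℕ := ∑ i, (x i).natAbs

/-- Nearest-neighbor adjacency on `ℤ^d`. -/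
def adj {d : ℕ} (x y : Fin d → ℤ) : Prop := norm1 (x - y) = 1

/-- `x ↔ y` in `ω`: a nearest-neighbor path with occupied interior vertices, `x ≠ y`. -/
def Connected {d : ℕ} (ω : Config d) (x y : Fin d → ℤ) : Prop :=
  x ≠ y ∧ ∃ l : List (Fin d → ℤ), List.Chain adj x (l ++ [y]) ∧ ∀ v ∈ l, ω v = true

/-- `μ` is the Bernoulli product measure with density `p`. -/
def IsBernoulli {d : ℕ} (p : ℝ) (μ : Measure (Config d)) : Prop :=
  ∀ (s : Finset (Fin d → ℤ)) (η : (Fin d → ℤ) → Bool),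
    μ {ω | ∀ v ∈ s, ω v = η v} =
      ∏ v ∈ s, (if η v then ENNReal.ofReal p else ENNReal.ofReal (1 - p))

/-- The two-point function `τ_p(x) = P_p(0 ↔ x)`. -/
noncomputable def tau {d : ℕ} (μ : Measure (Config d)) (x : Fin d → ℤ) : ℝ :=
  (μ {ω | Connected ω 0 x}).toReal

/-- `J(x) = 𝟙{|x|₁ = 1}`. -/
def Jfun {d : ℕ} (x : Fin d → ℤ) : ℝ := if norm1 x = 1 then 1 else 0

/-- An increasing event. -/
def IncreasingEvent {d : ℕ} (A : Set (Config d)) : Prop :=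
  ∀ ω ω' : Config d, (∀ v, ω v = true → ω' v = true) → ω ∈ A → ω' ∈ A

/-- Disjoint occurrence `A ∘ B`. -/
def DisjOcc {d : ℕ} (A B : Set (Config d)) : Set (Config d) :=
  {ω | ∃ K L : Set (Fin d → ℤ), Disjoint K L ∧
    (∀ ω', (∀ v ∈ K, ω' v = ω v) → ω' ∈ A) ∧
    (∀ ω', (∀ v ∈ L, ω' v = ω v) → ω' ∈ B)}

/-!
The event `0 ↔ x` is increasing, so BK bounds `P_p({0 ↔ x} ∘ {0 ↔ x})` by `τ_p(x)²`, and it remains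
to show `τ_p(x) ≤ p (J ∗ τ_p)(x)`. As `|x|₁ ≥ 2`, an occupied path from `0` to `x` first steps to an
occupied neighbour `y` of `0` and then connects `y` to `x`. Cutting a path from `y` at its last
visit to `y` shows that `{y ↔ x}` does not depend on the state of `y`, so it is independent of
`{y occupied}`; by translation invariance of the product measure, `P_p(y ↔ x) = τ_p(x - y)`.
-/

open MeasurableSpace ProbabilityTheory

variable {d : ℕ}

theorem List.exists_suffix_isChain_cons_not_mem {α : Type*} {R : α → α → Prop} {a b : α} :
    ∀ {l : List α}, (a :: (l ++ [b])).IsChain R →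
      ∃ l', l' <:+ l ∧ a ∉ l' ∧ (a :: (l' ++ [b])).IsChain R
  | l, h => by
    by_cases ha : a ∈ l
    · obtain ⟨s, t, rfl⟩ := List.append_of_mem ha
      have ht : (a :: (t ++ [b])).IsChain R := h.suffix (by simp)
      have : t.length < (s ++ a :: t).length := by simp; omega
      obtain ⟨l', hl', ha', hc⟩ := List.exists_suffix_isChain_cons_not_mem ht
      exact ⟨l', hl'.trans (List.suffix_append_of_suffix (List.suffix_cons a t)), ha', hc⟩
    · exact ⟨l, List.suffix_refl l, ha, h⟩
  termination_by l => l.length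

lemma norm1_neg (x : Fin d → ℤ) : norm1 (-x) = norm1 x := by
  simp [norm1]

lemma adj_zero_left_iff {y : Fin d → ℤ} : adj 0 y ↔ norm1 y = 1 := by
  rw [adj, zero_sub, norm1_neg]

lemma adj_add_right_iff {u v : Fin d → ℤ} (c : Fin d → ℤ) : adj (u + c) (v + c) ↔ adj u v := by
  rw [adj, adj, add_sub_add_right_eq_sub]

lemma finite_setOf_norm1_eq_one : {y : Fin d → ℤ | norm1 y = 1}.Finite := by
  refine (Set.Finite.pi' fun _ => Set.finite_Icc (-1 : ℤ) 1).subset fun y hy i => ?_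
  have : (y i).natAbs ≤ 1 :=
    (Finset.single_le_sum (fun j _ => Nat.zero_le (y j).natAbs) (Finset.mem_univ i)).trans_eq hy
  simp only [Set.mem_Icc]
  omega

lemma tsum_Jfun_mul (f : (Fin d → ℤ) → ℝ) :
    ∑' y, Jfun y * f y = ∑ y ∈ finite_setOf_norm1_eq_one.toFinset, f y := by
  rw [tsum_eq_sum (s := finite_setOf_norm1_eq_one.toFinset) fun y hy => by simp_all [Jfun]]
  exact Finset.sum_congr rfl fun y hy => by simp_all [Jfun]

def Config.shift (c : Fin d → ℤ) (ω : Config d) : Config d := fun v => ω (v + c)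

lemma increasingEvent_setOf_connected (a b : Fin d → ℤ) :
    IncreasingEvent {ω : Config d | Connected ω a b} :=
  fun _ _ h ⟨hne, l, hch, hocc⟩ => ⟨hne, l, hch, fun v hv => h v (hocc v hv)⟩

lemma Connected.of_shift {ω : Config d} {a b c : Fin d → ℤ} (h : Connected (ω.shift c) a b) :
    Connected ω (a + c) (b + c) := by
  obtain ⟨hne, l, hch, hocc⟩ := h
  refine ⟨by simpa using hne, l.map (· + c), ?_, by simpa [Config.shift] using hocc⟩
  have := (List.isChain_map (R := adj) (· + c)).2
    (List.IsChain.imp (fun u v h => (adj_add_right_iff c).2 h) hch)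
  simp only [List.map_cons, List.map_append] at this
  exact this

lemma connected_shift_iff {ω : Config d} {a b c : Fin d → ℤ} :
    Connected (ω.shift c) a b ↔ Connected ω (a + c) (b + c) := by
  refine ⟨Connected.of_shift, fun h => ?_⟩
  have hω : (ω.shift c).shift (-c) = ω := by funext v; simp [Config.shift]
  rw [← hω] at h
  simpa using h.of_shift

lemma connected_iff_exists_not_mem {ω : Config d} {a b : Fin d → ℤ} :
    Connected ω a b ↔
      a ≠ b ∧ ∃ l, a ∉ l ∧ (a :: (l ++ [b])).IsChain adj ∧ ∀ v ∈ l, ω v = true := by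
  refine ⟨fun ⟨hne, l, hch, hocc⟩ => ?_, fun ⟨hne, l, _, hch, hocc⟩ => ⟨hne, l, hch, hocc⟩⟩
  obtain ⟨l', hl', ha, hch'⟩ := List.exists_suffix_isChain_cons_not_mem hch
  exact ⟨hne, l', ha, hch', fun v hv => hocc v (hl'.subset hv)⟩

def occupied (s : Finset (Fin d → ℤ)) : Set (Config d) := {ω | ∀ v ∈ s, ω v = true}

lemma measurableSet_site (v : Fin d → ℤ) : MeasurableSet {ω : Config d | ω v = true} :=
  (measurable_pi_apply v : Measurable fun ω : Config d => ω v) (measurableSet_singleton true)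

lemma measurableSet_occupied (s : Finset (Fin d → ℤ)) : MeasurableSet (occupied (d := d) s) := by
  simp only [occupied, Set.ofPred_forall]
  exact .biInter s.countable_toSet fun v _ => measurableSet_site v

lemma isPiSystem_range_occupied : IsPiSystem (Set.range (occupied (d := d))) := by
  rintro _ ⟨s, rfl⟩ _ ⟨t, rfl⟩ -
  exact ⟨s ∪ t, by ext; simp [occupied, or_imp, forall_and]⟩

lemma generateFrom_range_occupied :
    generateFrom (Set.range (occupied (d := d))) = MeasurableSpace.pi := by
  refine le_antisymm (generateFrom_le ?_) ?_
  · rintro _ ⟨s, rfl⟩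
    exact measurableSet_occupied s
  · refine iSup_le fun v => (measurable_to_bool (measurableSet_generateFrom ?_)).comap_le
    exact ⟨{v}, by ext; simp [occupied]⟩

lemma ext_of_occupied {μ ν : Measure (Config d)} [IsFiniteMeasure μ]
    (h : ∀ s, μ (occupied s) = ν (occupied s)) : μ = ν :=
  ext_of_generate_finite _ generateFrom_range_occupied.symm isPiSystem_range_occupied
    (by rintro _ ⟨s, rfl⟩; exact h s) (by simpa [occupied] using h ∅)

lemma Config.measurable_shift (c : Fin d → ℤ) : Measurable (Config.shift (d := d) c) :=
  measurable_pi_lambda _ fun v => measurable_pi_apply (v + c)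

lemma Config.preimage_shift_occupied (c : Fin d → ℤ) (s : Finset (Fin d → ℤ)) :
    Config.shift c ⁻¹' occupied s = occupied (s.map (addRightEmbedding c)) := by
  ext; simp [occupied, Config.shift]

lemma measurableSet_exists_occupied_list {S : Set (Fin d → ℤ)} {L : Set (List (Fin d → ℤ))}
    (hL : ∀ l ∈ L, ∀ v ∈ l, v ∈ S) :
    MeasurableSet[generateFrom {t | ∃ v ∈ S, {ω : Config d | ω v = true} = t}]
      {ω | ∃ l ∈ L, ∀ v ∈ l, ω v = true} := by
  have h : {ω : Config d | ∃ l ∈ L, ∀ v ∈ l, ω v = true} =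
      ⋃ l ∈ L, ⋂ v ∈ {v | v ∈ l}, {ω | ω v = true} := by
    ext; simp
  rw [h]
  exact .biUnion L.to_countable fun l hl => .biInter l.finite_toSet.countable fun v hv =>
    measurableSet_generateFrom ⟨v, hL l hl v hv, rfl⟩

variable {p : ℝ} {μ : Measure (Config d)}

lemma IsBernoulli.measure_occupied (hμ : IsBernoulli p μ) (s : Finset (Fin d → ℤ)) :
    μ (occupied s) = ENNReal.ofReal p ^ s.card := by
  simpa [occupied] using hμ s fun _ => true

lemma IsBernoulli.measure_site (hμ : IsBernoulli p μ) (v : Fin d → ℤ) :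
    μ {ω | ω v = true} = ENNReal.ofReal p := by
  simpa [occupied] using hμ.measure_occupied {v}

lemma IsBernoulli.map_shift [IsProbabilityMeasure μ] (hμ : IsBernoulli p μ) (c : Fin d → ℤ) :
    μ.map (Config.shift c) = μ := by
  have := Measure.isProbabilityMeasure_map (μ := μ) (Config.measurable_shift c).aemeasurable
  refine ext_of_occupied fun s => ?_
  rw [Measure.map_apply (Config.measurable_shift c) (measurableSet_occupied s),
    Config.preimage_shift_occupied, hμ.measure_occupied, hμ.measure_occupied, Finset.card_map]

lemma IsBernoulli.iIndepSet_site (hμ : IsBernoulli p μ) :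
    iIndepSet (fun v => {ω : Config d | ω v = true}) μ := by
  refine (iIndepSet_iff_meas_biInter measurableSet_site).2 fun s => ?_
  have h := hμ.measure_occupied s
  simp only [occupied, Set.ofPred_forall] at h
  simp [h, hμ.measure_site]

lemma measurableSet_connected_of_ne {a b : Fin d → ℤ} (hab : a ≠ b) :
    MeasurableSet[generateFrom {t | ∃ v ∈ ({a}ᶜ : Set _), {ω : Config d | ω v = true} = t}]
      {ω | Connected ω a b} := by
  have h : {ω : Config d | Connected ω a b} =
      {ω | ∃ l ∈ {l | a ∉ l ∧ (a :: (l ++ [b])).IsChain adj}, ∀ v ∈ l, ω v = true} := by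
    ext; simp [connected_iff_exists_not_mem, hab, and_assoc]
  rw [h]
  exact measurableSet_exists_occupied_list fun l hl v hv => by rintro rfl; exact hl.1 hv

lemma measurableSet_connected (a b : Fin d → ℤ) :
    MeasurableSet {ω : Config d | Connected ω a b} := by
  obtain rfl | hab := eq_or_ne a b
  · simp [Connected]
  · exact generateFrom_le (by rintro _ ⟨v, -, rfl⟩; exact measurableSet_site v) _
      (measurableSet_connected_of_ne hab)

lemma IsBernoulli.measure_site_inter_connected (hμ : IsBernoulli p μ) {y x : Fin d → ℤ}
    (hyx : y ≠ x) :
    μ ({ω | ω y = true} ∩ {ω | Connected ω y x}) = ENNReal.ofReal p * μ {ω | Connected ω y x} := by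
  have hind := hμ.iIndepSet_site.indep_generateFrom_of_disjoint measurableSet_site {y} {y}ᶜ
    disjoint_compl_right
  rw [(Indep_iff _ _ _).1 hind _ _ (measurableSet_generateFrom ⟨y, rfl, rfl⟩)
    (measurableSet_connected_of_ne hyx), hμ.measure_site]

lemma IsBernoulli.measure_connected_add [IsProbabilityMeasure μ] (hμ : IsBernoulli p μ)
    (a b c : Fin d → ℤ) :
    μ {ω | Connected ω (a + c) (b + c)} = μ {ω | Connected ω a b} := by
  conv_rhs => rw [← hμ.map_shift c]
  rw [Measure.map_apply (Config.measurable_shift c) (measurableSet_connected a b)]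
  simp only [Set.preimage_ofPred_eq, connected_shift_iff]

lemma IsBernoulli.ofReal_tau_sub [IsProbabilityMeasure μ] (hμ : IsBernoulli p μ)
    (x y : Fin d → ℤ) : ENNReal.ofReal (tau μ (x - y)) = μ {ω | Connected ω y x} := by
  rw [tau, ENNReal.ofReal_toReal (measure_ne_top _ _), ← hμ.measure_connected_add 0 (x - y) y,
    zero_add, sub_add_cancel]

lemma setOf_connected_subset_biUnion_neighbors {x : Fin d → ℤ} (hx : 2 ≤ norm1 x) :
    {ω : Config d | Connected ω 0 x} ⊆ ⋃ y ∈ finite_setOf_norm1_eq_one.toFinset,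
      {ω | ω y = true} ∩ {ω | Connected ω y x} := by
  rintro ω ⟨-, _ | ⟨y, l⟩, hch, hocc⟩
  · have : norm1 x = 1 := adj_zero_left_iff.1 (List.isChain_cons_cons.1 hch).1
    omega
  · obtain ⟨h0y, hyx⟩ := List.isChain_cons_cons.1 hch
    have hy : norm1 y = 1 := adj_zero_left_iff.1 h0y
    refine Set.mem_biUnion (by simpa using hy) ⟨hocc y List.mem_cons_self, ?_, l, hyx, ?_⟩
    · rintro rfl; omega
    · exact fun v hv => hocc v (List.mem_cons_of_mem y hv)

lemma IsBernoulli.tau_le [IsProbabilityMeasure μ] (hμ : IsBernoulli p μ) (hp : 0 ≤ p)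
    {x : Fin d → ℤ} (hx : 2 ≤ norm1 x) : tau μ x ≤ p * ∑' y, Jfun y * tau μ (x - y) := by
  have htau : ∀ z, 0 ≤ tau μ z := fun _ => ENNReal.toReal_nonneg
  rw [tsum_Jfun_mul, Finset.mul_sum]
  refine ENNReal.toReal_le_of_le_ofReal (Finset.sum_nonneg fun y _ => mul_nonneg hp (htau _)) ?_
  rw [ENNReal.ofReal_sum_of_nonneg fun y _ => mul_nonneg hp (htau _)]
  calc μ {ω | Connected ω 0 x}
      ≤ ∑ y ∈ finite_setOf_norm1_eq_one.toFinset, μ ({ω | ω y = true} ∩ {ω | Connected ω y x}) :=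
        (measure_mono (setOf_connected_subset_biUnion_neighbors hx)).trans
          (measure_biUnion_finset_le _ _)
    _ = _ := Finset.sum_congr rfl fun y hy => by
        have hyx : y ≠ x := by
          rintro rfl
          simp only [Set.Finite.mem_toFinset, Set.mem_ofPred_eq] at hy
          omega
        rw [hμ.measure_site_inter_connected hyx, ENNReal.ofReal_mul hp, hμ.ofReal_tau_sub]

theorem double_connection_bound_general (d : ℕ) (p : ℝ) (hp0 : 0 ≤ p)
    (μ : Measure (Config d)) [IsProbabilityMeasure μ] (hμ : IsBernoulli p μ)
    (hBK : ∀ A B : Set (Config d), IncreasingEvent A → IncreasingEvent B →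
      μ (DisjOcc A B) ≤ μ A * μ B)
    (x : Fin d → ℤ) (hx : 2 ≤ norm1 x) :
    (μ (DisjOcc {ω | Connected ω 0 x} {ω | Connected ω 0 x})).toReal ≤
      p ^ 2 * (∑' y : Fin d → ℤ, Jfun y * tau μ (x - y)) ^ 2 := by
  have hinc := increasingEvent_setOf_connected (d := d) 0 x
  calc _ ≤ tau μ x ^ 2 := by
        rw [tau, sq, ← ENNReal.toReal_mul]
        exact ENNReal.toReal_mono (by finiteness) (hBK _ _ hinc hinc)
    _ ≤ (p * ∑' y, Jfun y * tau μ (x - y)) ^ 2 :=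
        pow_le_pow_left₀ ENNReal.toReal_nonneg (hμ.tau_le hp0 hx) 2
    _ = _ := mul_pow _ _ 2

/-- Assuming the BK inequality, for `|x|₁ ≥ 2` one has
`P_p({0 ↔ x} ∘ {0 ↔ x}) ≤ p² ((J ∗ τ_p)(x))²`. -/
theorem double_connection_bound (d : ℕ) (p : ℝ) (hp0 : 0 ≤ p) (hp1 : p ≤ 1)
    (μ : Measure (Config d)) [IsProbabilityMeasure μ] (hμ : IsBernoulli p μ)
    (hBK : ∀ A B : Set (Config d), IncreasingEvent A → IncreasingEvent B →
      μ (DisjOcc A B) ≤ μ A * μ B)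
    (x : Fin d → ℤ) (hx : 2 ≤ norm1 x) :
    (μ (DisjOcc {ω | Connected ω 0 x} {ω | Connected ω 0 x})).toReal ≤
      p ^ 2 * (∑' y : Fin d → ℤ, Jfun y * tau μ (x - y)) ^ 2 :=
  double_connection_bound_general d p hp0 μ hμ hBK x hx
end
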